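/- arXiv:2110.15591 — 3 statements merged into one kernel-verified Lean document; each statement's English description precedes it below -/
import Mathlib

section
/- (Gale transform in the case m₁ = m₂ = m₃) Assume m₁ = m₂ = m₃. Define β₁ : S → ℝ by β₁(u) = 1 for u ∈ V₁, β₁(u) = −1 for u ∈ V₂, β₁(u) = 0 for u ∈ V₃, and β₂ : S → ℝ by β₂(u) = 1 for u ∈ V₁, β₂(u) = 0 for u ∈ V₂, β₂(u) = −1 for u ∈ V₃. Then the vector space of all functions c : S → ℝ satisfying Σ_{u∈S} c(u) = 0 and Σ_{u∈S} c(u)·u = 0 is 2-dimensional and is spanned by β₁ and β₂. -/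
/-!
Both β₁ and β₂ are affine dependences because each block sums to 𝟙 and the blocks have equal
size. The linear dependences of S form the kernel of `c ↦ ∑ c u • u` on `S → ℝ`, which by
rank–nullity has dimension `|S| - dim span S = 2`; since β₁ and β₂ are independent on S (look at
one point of V₂ and one of V₃), they span that kernel, and in particular every affine dependence.
-/

open Module Submodule

theorem Finset.sum_smul_eq_of_partition_three {α R M : Type*} [DecidableEq α] [Semiring R]
    [AddCommMonoid M] [Module R M] {S V₁ V₂ V₃ : Finset α} (hunion : V₁ ∪ V₂ ∪ V₃ = S)
    (hd₁₂ : Disjoint V₁ V₂) (hd₁₃ : Disjoint V₁ V₃) (hd₂₃ : Disjoint V₂ V₃)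
    {β : α → R} {a₁ a₂ a₃ : R} (h₁ : ∀ u ∈ V₁, β u = a₁) (h₂ : ∀ u ∈ V₂, β u = a₂)
    (h₃ : ∀ u ∈ V₃, β u = a₃) (g : α → M) :
    ∑ u ∈ S, β u • g u = a₁ • ∑ u ∈ V₁, g u + a₂ • ∑ u ∈ V₂, g u + a₃ • ∑ u ∈ V₃, g u := by
  rw [← hunion, sum_union (disjoint_union_left.2 ⟨hd₁₃, hd₂₃⟩), sum_union hd₁₂,
    smul_sum, smul_sum, smul_sum]
  congr 1; congr 1
  exacts [sum_congr rfl fun u hu => by rw [h₁ u hu], sum_congr rfl fun u hu => by rw [h₂ u hu],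
    sum_congr rfl fun u hu => by rw [h₃ u hu]]

theorem Submodule.exists_smul_add_smul_eq_of_finrank_eq_two {K M : Type*} [Field K]
    [AddCommGroup M] [Module K M] {W : Submodule K M} (hW : finrank K W = 2) {x y z : M}
    (hx : x ∈ W) (hy : y ∈ W) (hz : z ∈ W) (hxy : LinearIndependent K ![x, y]) :
    ∃ s t : K, s • x + t • y = z := by
  have : FiniteDimensional K W := Module.finite_of_finrank_pos (by omega)
  have hspan : span K {x, y} = W := by
    refine eq_of_le_of_finrank_eq (span_le.2 (Set.insert_subset hx (by simpa using hy))) ?_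
    rw [hW, ← Matrix.range_cons_cons_empty x y ![], finrank_span_eq_card hxy, Fintype.card_fin]
  exact mem_span_pair.1 (hspan ▸ hz)

theorem Finset.finrank_ker_linearCombination_add_finrank_span {K V : Type*} [Field K]
    [AddCommGroup V] [Module K V] (S : Finset V) :
    finrank K (LinearMap.ker (Fintype.linearCombination K ((↑) : S → V))) +
      finrank K (span K (S : Set V)) = S.card := by
  have h := LinearMap.finrank_range_add_finrank_ker (Fintype.linearCombination K ((↑) : S → V))
  have hrange : Set.range ((↑) : S → V) = S := Subtype.range_coe
  rw [Fintype.range_linearCombination, hrange, finrank_fintype_fun_eq_card, Fintype.card_coe] at h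
  omega

theorem Finset.exists_eq_mul_add_mul_of_finrank_span_add_two {K V : Type*} [Field K]
    [AddCommGroup V] [Module K V] {S : Finset V} (hS : finrank K (span K (S : Set V)) + 2 = S.card)
    {β₁ β₂ c : V → K} (h₁ : ∑ u ∈ S, β₁ u • u = 0) (h₂ : ∑ u ∈ S, β₂ u • u = 0)
    (hindep : ∀ s t : K, (∀ u ∈ S, s * β₁ u + t * β₂ u = 0) → s = 0 ∧ t = 0)
    (hc : ∑ u ∈ S, c u • u = 0) :
    ∃ s t : K, ∀ u ∈ S, c u = s * β₁ u + t * β₂ u := by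
  set W := LinearMap.ker (Fintype.linearCombination K ((↑) : S → V))
  have hmem : ∀ γ : V → K, ∑ u ∈ S, γ u • u = 0 → (fun u : S => γ u) ∈ W := fun γ hγ => by
    rwa [LinearMap.mem_ker, Fintype.linearCombination_apply,
      Finset.sum_coe_sort S (fun u => γ u • u)]
  have hW : finrank K W = 2 := by
    have := S.finrank_ker_linearCombination_add_finrank_span (K := K)
    change finrank K W + _ = _ at this
    omega
  have hli : LinearIndependent K ![fun u : S => β₁ u, fun u : S => β₂ u] :=
    LinearIndependent.pair_iff.2 fun s t h => hindep s t fun u hu => by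
      simpa [mul_comm] using congrFun h ⟨u, hu⟩
  obtain ⟨s, t, hst⟩ :=
    exists_smul_add_smul_eq_of_finrank_eq_two hW (hmem β₁ h₁) (hmem β₂ h₂) (hmem c hc) hli
  exact ⟨s, t, fun u hu => by simpa [mul_comm] using (congrFun hst ⟨u, hu⟩).symm⟩

theorem stmt_5_general
    (n : ℕ)
    (S V1 V2 V3 : Finset (Fin (2 * n) → ℝ))
    (hScard : S.card = n + 2)
    (hunion : V1 ∪ V2 ∪ V3 = S)
    (hd12 : Disjoint V1 V2) (hd13 : Disjoint V1 V3) (hd23 : Disjoint V2 V3)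
    (hne2 : V2.Nonempty) (hne3 : V3.Nonempty)
    (hsum1 : ∑ v ∈ V1, v = fun _ => (1 : ℝ))
    (hsum2 : ∑ v ∈ V2, v = fun _ => (1 : ℝ))
    (hsum3 : ∑ v ∈ V3, v = fun _ => (1 : ℝ))
    (hspan : Module.finrank ℝ (Submodule.span ℝ (S : Set (Fin (2 * n) → ℝ))) = n)
    (h12 : V1.card = V2.card) (h23 : V2.card = V3.card)
    : ∀ β₁ β₂ : (Fin (2 * n) → ℝ) → ℝ,
      (∀ u ∈ V1, β₁ u = 1) → (∀ u ∈ V2, β₁ u = -1) → (∀ u ∈ V3, β₁ u = 0) →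
      (∀ u ∈ V1, β₂ u = 1) → (∀ u ∈ V2, β₂ u = 0) → (∀ u ∈ V3, β₂ u = -1) →
      ((∑ u ∈ S, β₁ u = 0 ∧ ∑ u ∈ S, β₁ u • u = 0) ∧
        (∑ u ∈ S, β₂ u = 0 ∧ ∑ u ∈ S, β₂ u • u = 0) ∧
        (∀ s t : ℝ, (∀ u ∈ S, s * β₁ u + t * β₂ u = 0) → s = 0 ∧ t = 0) ∧
        (∀ c : (Fin (2 * n) → ℝ) → ℝ, ∑ u ∈ S, c u = 0 → ∑ u ∈ S, c u • u = 0 →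
          ∃ s t : ℝ, ∀ u ∈ S, c u = s * β₁ u + t * β₂ u)) := by
  intro β₁ β₂ hβ₁V1 hβ₁V2 hβ₁V3 hβ₂V1 hβ₂V2 hβ₂V3
  have hβ₁ : ∑ u ∈ S, β₁ u • u = 0 := by
    rw [Finset.sum_smul_eq_of_partition_three hunion hd12 hd13 hd23 hβ₁V1 hβ₁V2 hβ₁V3, hsum1,
      hsum2]
    simp
  have hβ₂ : ∑ u ∈ S, β₂ u • u = 0 := by
    rw [Finset.sum_smul_eq_of_partition_three hunion hd12 hd13 hd23 hβ₂V1 hβ₂V2 hβ₂V3, hsum1,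
      hsum3]
    simp
  have hindep : ∀ s t : ℝ, (∀ u ∈ S, s * β₁ u + t * β₂ u = 0) → s = 0 ∧ t = 0 := by
    intro s t h
    obtain ⟨u₂, hu₂⟩ := hne2
    obtain ⟨u₃, hu₃⟩ := hne3
    have e₂ := h u₂ (hunion ▸ by simp [hu₂])
    have e₃ := h u₃ (hunion ▸ by simp [hu₃])
    rw [hβ₁V2 u₂ hu₂, hβ₂V2 u₂ hu₂] at e₂
    rw [hβ₁V3 u₃ hu₃, hβ₂V3 u₃ hu₃] at e₃
    constructor <;> linarith
  refine ⟨⟨?_, hβ₁⟩, ⟨?_, hβ₂⟩, hindep, fun c _ hc =>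
    Finset.exists_eq_mul_add_mul_of_finrank_span_add_two (by omega) hβ₁ hβ₂ hindep hc⟩
  · simpa [h12] using Finset.sum_smul_eq_of_partition_three hunion hd12 hd13 hd23
      hβ₁V1 hβ₁V2 hβ₁V3 (fun _ => (1 : ℝ))
  · simpa [h12, h23] using Finset.sum_smul_eq_of_partition_three hunion hd12 hd13 hd23
      hβ₂V1 hβ₂V2 hβ₂V3 (fun _ => (1 : ℝ))

theorem stmt_5
    (n : ℕ) (hn : 0 < n)
    (S V1 V2 V3 : Finset (Fin (2 * n) → ℝ))
    (h01 : ∀ v ∈ S, ∀ i, v i = 0 ∨ v i = 1)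
    (hScard : S.card = n + 2)
    (hunion : V1 ∪ V2 ∪ V3 = S)
    (hd12 : Disjoint V1 V2) (hd13 : Disjoint V1 V3) (hd23 : Disjoint V2 V3)
    (hne1 : V1.Nonempty) (hne2 : V2.Nonempty) (hne3 : V3.Nonempty)
    (hsum1 : ∑ v ∈ V1, v = fun _ => (1 : ℝ))
    (hsum2 : ∑ v ∈ V2, v = fun _ => (1 : ℝ))
    (hsum3 : ∑ v ∈ V3, v = fun _ => (1 : ℝ))
    (hspan : Module.finrank ℝ (Submodule.span ℝ (S : Set (Fin (2 * n) → ℝ))) = n)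
    (h12 : V1.card = V2.card) (h23 : V2.card = V3.card)
    : ∀ β₁ β₂ : (Fin (2 * n) → ℝ) → ℝ,
      (∀ u ∈ V1, β₁ u = 1) → (∀ u ∈ V2, β₁ u = -1) → (∀ u ∈ V3, β₁ u = 0) →
      (∀ u ∈ V1, β₂ u = 1) → (∀ u ∈ V2, β₂ u = 0) → (∀ u ∈ V3, β₂ u = -1) →
      ((∑ u ∈ S, β₁ u = 0 ∧ ∑ u ∈ S, β₁ u • u = 0) ∧
        (∑ u ∈ S, β₂ u = 0 ∧ ∑ u ∈ S, β₂ u • u = 0) ∧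
        (∀ s t : ℝ, (∀ u ∈ S, s * β₁ u + t * β₂ u = 0) → s = 0 ∧ t = 0) ∧
        (∀ c : (Fin (2 * n) → ℝ) → ℝ, ∑ u ∈ S, c u = 0 → ∑ u ∈ S, c u • u = 0 →
          ∃ s t : ℝ, ∀ u ∈ S, c u = s * β₁ u + t * β₂ u)) :=
  stmt_5_general n S V1 V2 V3 hScard hunion hd12 hd13 hd23 hne2 hne3 hsum1 hsum2 hsum3 hspan h12 h23
end

section
/- (Beyond exactly m₂−1 facets, case m₃ > m₂ > m₁ ≥ 2) Assume m₃ > m₂ > m₁ ≥ 2 and let v₀ ∈ V₂, so that Δ = conv(S ∖ {v₀}) is an n-simplex whose facets are opposite its vertices. Then: (a) for every v ∈ V₂ ∖ {v₀} there exists an affine map f : ℝ^(2n) → ℝ vanishing on S ∖ {v₀, v} with f(v) > 0 and f(v₀) < 0 (v₀ is beyond the facet of Δ opposite v); and (b) for every w ∈ V₁ ∪ V₃, every affine map f : ℝ^(2n) → ℝ vanishing on S ∖ {v₀, w} with f(w) > 0 satisfies f(v₀) > 0 (v₀ is not beyond the facet of Δ opposite w). Hence v₀ is beyond exactly m₂ −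 1 facets of Δ. -/
/-!
The three parts of `S` sum to the same vector, so `𝟙_{V₁} - 𝟙_{V₂}` is a linear relation among
the points of `S` whose coefficients do not sum to zero, while
`c = (m₃ - m₂) 𝟙_{V₁} + (m₁ - m₃) 𝟙_{V₂} + (m₂ - m₁) 𝟙_{V₃}` is an affine relation. Since
`dim span S = |S| - 2`, the linear relations form a plane, so the affine relations are the
multiples of `c`. As `c v₀ ≠ 0`, the set `S ∖ {v₀}` is affinely independent, and `-c / c v₀` are
the barycentric coordinates of `v₀` with respect to it: `-1` on `V₂ ∖ {v₀}` and positive on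
`V₁ ∪ V₃`. A point is beyond the facet of a simplex opposite a vertex exactly when its barycentric
coordinate at that vertex is negative.
-/

open Finset Module Submodule

section AffineRelations

variable {k V ι : Type*} [Field k] [AddCommGroup V] [Module k V] [Fintype ι]

def affineRelations (p : ι → V) : Submodule k (ι → k) :=
  LinearMap.ker (Fintype.linearCombination k p) ⊓
    LinearMap.ker (Fintype.linearCombination k fun _ : ι ↦ (1 : k))

lemma mem_affineRelations {p : ι → V} {w : ι → k} :
    w ∈ affineRelations p ↔ ∑ i, w i • p i = 0 ∧ ∑ i, w i = 0 := by
  simp [affineRelations, Fintype.linearCombination_apply]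

lemma finrank_ker_linearCombination_add_finrank_span (p : ι → V) :
    finrank k (LinearMap.ker (Fintype.linearCombination k p)) + finrank k (span k (Set.range p)) =
      Fintype.card ι := by
  rw [← Fintype.range_linearCombination, add_comm, LinearMap.finrank_range_add_finrank_ker,
    finrank_fintype_fun_eq_card]

lemma finrank_inf_ker_lt {M N : Type*} [AddCommGroup M] [Module k M] [AddCommGroup N]
    [Module k N] {U : Submodule k M} [FiniteDimensional k U] (ℓ : M →ₗ[k] N) {x : M}
    (hx : x ∈ U) (hℓx : ℓ x ≠ 0) : finrank k ↥(U ⊓ LinearMap.ker ℓ) < finrank k U :=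
  Submodule.finrank_lt_finrank_of_lt <|
    SetLike.lt_iff_le_and_exists.2 ⟨inf_le_left, x, hx, fun h ↦ hℓx (LinearMap.mem_ker.1 h.2)⟩

/-- At most two independent linear relations, one of which is not affine, leave room for at most
one affine relation up to scaling. -/
lemma eq_zero_of_mem_affineRelations {p : ι → V}
    (hrank : Fintype.card ι ≤ finrank k (span k (Set.range p)) + 2) {ρ c d : ι → k} {i : ι}
    (hρ : ∑ j, ρ j • p j = 0) (hρsum : ∑ j, ρ j ≠ 0)
    (hc : c ∈ affineRelations p) (hci : c i ≠ 0) (hd : d ∈ affineRelations p) (hdi : d i = 0) :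
    d = 0 := by
  have hlin := finrank_inf_ker_lt (Fintype.linearCombination k fun _ : ι ↦ (1 : k))
    (U := LinearMap.ker (Fintype.linearCombination k p)) (x := ρ)
    (by simpa [Fintype.linearCombination_apply] using hρ)
    (by simpa [Fintype.linearCombination_apply] using hρsum)
  have haff := finrank_inf_ker_lt (LinearMap.proj i) hc hci
  have hker := finrank_ker_linearCombination_add_finrank_span (k := k) p
  have hbot : affineRelations p ⊓ LinearMap.ker (LinearMap.proj i) = ⊥ :=
    Submodule.finrank_eq_zero.1 <| show finrank k ↥(affineRelations p ⊓ LinearMap.ker _) = 0 by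
      unfold affineRelations at haff ⊢; omega
  have hmem : d ∈ affineRelations p ⊓ LinearMap.ker (LinearMap.proj i) := ⟨hd, hdi⟩
  rwa [hbot, Submodule.mem_bot] at hmem

lemma mem_affineRelations_coe {S : Finset V} {w : V → k} :
    (fun u : S ↦ w u) ∈ affineRelations ((↑) : S → V) ↔
      ∑ u ∈ S, w u • u = 0 ∧ ∑ u ∈ S, w u = 0 := by
  rw [mem_affineRelations, sum_coe_sort S (fun u ↦ w u • u), sum_coe_sort]

lemma affineIndependent_erase_of_relations [DecidableEq V] {S : Finset V} {v₀ : V} (hv₀ : v₀ ∈ S)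
    (hrank : #S ≤ finrank k (span k (S : Set V)) + 2) {ρ c : V → k}
    (hρ : ∑ u ∈ S, ρ u • u = 0) (hρsum : ∑ u ∈ S, ρ u ≠ 0)
    (hc : ∑ u ∈ S, c u • u = 0) (hcsum : ∑ u ∈ S, c u = 0) (hcv₀ : c v₀ ≠ 0) :
    AffineIndependent k ((↑) : S.erase v₀ → V) := by
  by_contra hdep
  obtain ⟨f, hf, hfsum, x, hx, hfx⟩ := exists_nontrivial_relation_sum_zero_of_not_affine_ind hdep
  set d := Function.update f v₀ 0
  have hd_erase : ∀ u ∈ S.erase v₀, d u = f u := fun u hu ↦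
    Function.update_of_ne (ne_of_mem_erase hu) _ _
  have hdrel : ∑ u ∈ S, d u • u = 0 ∧ ∑ u ∈ S, d u = 0 := by
    rw [← sum_erase S (f := fun u ↦ d u • u) (a := v₀) (by simp [d]),
      ← sum_erase S (f := d) (a := v₀) (by simp [d]),
      sum_congr rfl fun u hu ↦ by rw [hd_erase u hu], sum_congr rfl hd_erase]
    exact ⟨hf, hfsum⟩
  have hd : (fun u : S ↦ d u) = 0 :=
    eq_zero_of_mem_affineRelations (i := ⟨v₀, hv₀⟩)
      (by rwa [Subtype.range_coe_subtype, setOfPred_mem, Fintype.card_coe])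
      (by rwa [sum_coe_sort S (fun u ↦ ρ u • u)]) (by rwa [sum_coe_sort])
      (mem_affineRelations_coe.2 ⟨hc, hcsum⟩) hcv₀ (mem_affineRelations_coe.2 hdrel) (by simp [d])
  exact hfx (by simpa [hd_erase x hx] using congrFun hd ⟨x, mem_of_mem_erase hx⟩)

end AffineRelations

section AffineMaps

variable {k V : Type*} [AddCommGroup V]

lemma AffineMap.apply_sum_smul_of_sum_eq_one [Ring k] [Module k V] (f : V →ᵃ[k] k)
    {s : Finset V} {w : V → k} (hw : ∑ u ∈ s, w u = 1) :
    f (∑ u ∈ s, w u • u) = ∑ u ∈ s, w u * f u := by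
  rw [← s.affineCombination_eq_linear_combination _ _ hw, s.map_affineCombination _ _ hw,
    s.affineCombination_eq_linear_combination _ _ hw]
  rfl

lemma AffineMap.apply_sum_smul_of_eq_zero [Ring k] [Module k V] (f : V →ᵃ[k] k)
    {s : Finset V} {w : V → k} (hw : ∑ u ∈ s, w u = 1) {v : V} (hv : v ∈ s)
    (hf : ∀ u ∈ s, u ≠ v → f u = 0) :
    f (∑ u ∈ s, w u • u) = w v * f v := by
  rw [f.apply_sum_smul_of_sum_eq_one hw,
    sum_eq_single_of_mem v hv fun u hu huv ↦ by rw [hf u hu huv, mul_zero]]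

lemma AffineIndependent.exists_affineMap_eq_one_of_mem [DivisionRing k] [Module k V] {s : Set V}
    (hs : AffineIndependent k ((↑) : s → V)) {v : V} (hv : v ∈ s) :
    ∃ f : V →ᵃ[k] k, f v = 1 ∧ ∀ u ∈ s, u ≠ v → f u = 0 := by
  obtain ⟨t, hst, ht, htop⟩ := exists_subset_affineIndependent_affineSpan_eq_top hs
  let b : AffineBasis t k V := ⟨(↑), ht, by rwa [Subtype.range_coe]⟩
  exact ⟨b.coord ⟨v, hst hv⟩, b.coord_apply_eq _, fun u hu huv ↦
    b.coord_apply_ne (j := ⟨u, hst hu⟩) fun h ↦ huv (congrArg Subtype.val h).symm⟩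

lemma eq_sum_erase_smul_of_relation [Field k] [Module k V] [DecidableEq V] {S : Finset V}
    {v₀ : V} (hv₀ : v₀ ∈ S) {c : V → k} (hc : ∑ u ∈ S, c u • u = 0) (hcsum : ∑ u ∈ S, c u = 0)
    (hcv₀ : c v₀ ≠ 0) :
    ∑ u ∈ S.erase v₀, -c u / c v₀ = 1 ∧ ∑ u ∈ S.erase v₀, (-c u / c v₀) • u = v₀ := by
  rw [← add_sum_erase S _ hv₀] at hc hcsum
  constructor
  · rw [← sum_div, sum_neg_distrib, div_eq_one_iff_eq hcv₀]
    linear_combination -hcsum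
  · calc ∑ u ∈ S.erase v₀, (-c u / c v₀) • u = -(c v₀)⁻¹ • ∑ u ∈ S.erase v₀, c u • u := by
          rw [smul_sum]
          exact sum_congr rfl fun u _ ↦ by rw [smul_smul]; congr 1; ring
      _ = v₀ := by
          rw [eq_neg_of_add_eq_zero_right hc, smul_neg, neg_smul, neg_neg, smul_smul,
            inv_mul_cancel₀ hcv₀, one_smul]

lemma AffineIndependent.exists_affineMap_neg_of_weight_neg [Field k] [LinearOrder k]
    [IsStrictOrderedRing k] [Module k V] {s : Finset V}
    (hs : AffineIndependent k ((↑) : s → V)) {w : V → k} (hw : ∑ u ∈ s, w u = 1) {v : V}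
    (hv : v ∈ s) (hwv : w v < 0) :
    ∃ f : V →ᵃ[k] k, (∀ u ∈ s, u ≠ v → f u = 0) ∧ 0 < f v ∧ f (∑ u ∈ s, w u • u) < 0 := by
  obtain ⟨f, hfv, hf⟩ := hs.exists_affineMap_eq_one_of_mem (s := (s : Set V)) hv
  refine ⟨f, hf, hfv ▸ one_pos, ?_⟩
  rwa [f.apply_sum_smul_of_eq_zero hw hv hf, hfv, mul_one]

end AffineMaps

section Tripartition

variable {k E : Type*} [DecidableEq E]

structure IsTripartition (S V1 V2 V3 : Finset E) : Prop where
  union_eq : V1 ∪ V2 ∪ V3 = S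
  disjoint₁₂ : Disjoint V1 V2
  disjoint₁₃ : Disjoint V1 V3
  disjoint₂₃ : Disjoint V2 V3

def partWeight (V1 V2 : Finset E) (a b c : k) (u : E) : k :=
  if u ∈ V1 then a else if u ∈ V2 then b else c

variable {S V1 V2 V3 : Finset E} {a b c : k} {u : E}

lemma partWeight_of_mem₁ (hu : u ∈ V1) : partWeight V1 V2 a b c u = a := if_pos hu

namespace IsTripartition

lemma mem_iff (hS : IsTripartition S V1 V2 V3) : u ∈ S ↔ u ∈ V1 ∨ u ∈ V2 ∨ u ∈ V3 := by
  rw [← hS.union_eq]; simp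

lemma sum_eq {M : Type*} [AddCommMonoid M] (hS : IsTripartition S V1 V2 V3) (g : E → M) :
    ∑ u ∈ S, g u = ∑ u ∈ V1, g u + ∑ u ∈ V2, g u + ∑ u ∈ V3, g u := by
  rw [← hS.union_eq, sum_union (disjoint_union_left.2 ⟨hS.disjoint₁₃, hS.disjoint₂₃⟩),
    sum_union hS.disjoint₁₂]

lemma subset₂ (hS : IsTripartition S V1 V2 V3) : V2 ⊆ S :=
  fun _ hu ↦ hS.mem_iff.2 (Or.inr (Or.inl hu))

lemma mem_erase_of_mem_sdiff (hS : IsTripartition S V1 V2 V3) {v₀ : E} (hu : u ∈ V2 \ {v₀}) :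
    u ∈ S.erase v₀ := by
  rw [mem_sdiff, mem_singleton] at hu
  exact mem_erase.2 ⟨hu.2, hS.subset₂ hu.1⟩

lemma mem_erase_of_mem_union (hS : IsTripartition S V1 V2 V3) {v₀ : E} (hv₀ : v₀ ∈ V2)
    (hu : u ∈ V1 ∪ V3) : u ∈ S.erase v₀ := by
  refine mem_erase.2 ⟨?_, hS.mem_iff.2 ?_⟩ <;> rcases mem_union.1 hu with hu | hu
  · exact (ne_of_mem_of_not_mem hv₀ (disjoint_left.1 hS.disjoint₁₂ hu)).symm
  · exact (ne_of_mem_of_not_mem hv₀ (disjoint_right.1 hS.disjoint₂₃ hu)).symm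
  · exact Or.inl hu
  · exact Or.inr (Or.inr hu)

lemma ncard_setOf_eq_card₂_sub_one (hS : IsTripartition S V1 V2 V3) {P : E → Prop} {v₀ : E}
    (hv₀ : v₀ ∈ V2) (hP₂ : ∀ v ∈ V2 \ {v₀}, P v) (hP₁₃ : ∀ v ∈ V1 ∪ V3, ¬P v) :
    {v | v ∈ S \ {v₀} ∧ P v}.ncard = #V2 - 1 := by
  have hset : {v | v ∈ S \ {v₀} ∧ P v} = ↑(V2 \ {v₀}) := by
    ext v
    simp only [Set.mem_ofPred_eq, coe_sdiff, coe_singleton, Set.mem_sdiff, mem_coe,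
      Set.mem_singleton_iff, mem_sdiff, mem_singleton]
    refine ⟨fun ⟨⟨hvS, hv⟩, hPv⟩ ↦ ⟨?_, hv⟩, fun ⟨hv₂, hv⟩ ↦ ⟨⟨?_, hv⟩, hP₂ v (by simp [hv₂, hv])⟩⟩
    · rcases hS.mem_iff.1 hvS with hv₁ | hv₂ | hv₃
      · exact absurd hPv (hP₁₃ v (mem_union_left _ hv₁))
      · exact hv₂
      · exact absurd hPv (hP₁₃ v (mem_union_right _ hv₃))
    · exact hS.subset₂ hv₂
  rw [hset, Set.ncard_coe_finset, sdiff_singleton_eq_erase, card_erase_of_mem hv₀]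

lemma partWeight_of_mem₂ (hS : IsTripartition S V1 V2 V3) (hu : u ∈ V2) :
    partWeight V1 V2 a b c u = b := by
  simp [partWeight, disjoint_right.1 hS.disjoint₁₂ hu, hu]

lemma partWeight_of_mem₃ (hS : IsTripartition S V1 V2 V3) (hu : u ∈ V3) :
    partWeight V1 V2 a b c u = c := by
  simp [partWeight, disjoint_right.1 hS.disjoint₁₃ hu, disjoint_right.1 hS.disjoint₂₃ hu]

lemma sum_partWeight [CommRing k] (hS : IsTripartition S V1 V2 V3) :
    ∑ u ∈ S, partWeight V1 V2 a b c u = a * #V1 + b * #V2 + c * #V3 := by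
  rw [hS.sum_eq, sum_congr rfl fun u hu ↦ partWeight_of_mem₁ hu,
    sum_congr rfl fun u hu ↦ hS.partWeight_of_mem₂ hu,
    sum_congr rfl fun u hu ↦ hS.partWeight_of_mem₃ hu]
  simp only [sum_const, nsmul_eq_mul]
  ring

lemma sum_partWeight_smul [Ring k] [AddCommGroup E] [Module k E] (hS : IsTripartition S V1 V2 V3)
    {e : E} (h1 : ∑ u ∈ V1, u = e) (h2 : ∑ u ∈ V2, u = e) (h3 : ∑ u ∈ V3, u = e) :
    ∑ u ∈ S, partWeight V1 V2 a b c u • u = (a + b + c) • e := by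
  have h₁ : ∑ u ∈ V1, partWeight V1 V2 a b c u • u = a • e := by
    rw [← h1, smul_sum]; exact sum_congr rfl fun u hu ↦ by rw [partWeight_of_mem₁ hu]
  have h₂ : ∑ u ∈ V2, partWeight V1 V2 a b c u • u = b • e := by
    rw [← h2, smul_sum]; exact sum_congr rfl fun u hu ↦ by rw [hS.partWeight_of_mem₂ hu]
  have h₃ : ∑ u ∈ V3, partWeight V1 V2 a b c u • u = c • e := by
    rw [← h3, smul_sum]; exact sum_congr rfl fun u hu ↦ by rw [hS.partWeight_of_mem₃ hu]
  rw [hS.sum_eq, h₁, h₂, h₃, add_smul, add_smul]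

end IsTripartition

end Tripartition

section TripartitionRelation

variable {k E : Type*} [DecidableEq E] [Field k] {S V1 V2 V3 : Finset E}

def tripartRelation (V1 V2 V3 : Finset E) : E → k :=
  partWeight V1 V2 ((#V3 : k) - #V2) (#V1 - #V3) (#V2 - #V1)

namespace IsTripartition

lemma sum_tripartRelation (hS : IsTripartition S V1 V2 V3) :
    ∑ u ∈ S, tripartRelation (k := k) V1 V2 V3 u = 0 := by
  rw [tripartRelation, hS.sum_partWeight]
  ring

variable [AddCommGroup E] [Module k E] {e : E}

lemma sum_tripartRelation_smul (hS : IsTripartition S V1 V2 V3) (h1 : ∑ u ∈ V1, u = e)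
    (h2 : ∑ u ∈ V2, u = e) (h3 : ∑ u ∈ V3, u = e) :
    ∑ u ∈ S, tripartRelation (k := k) V1 V2 V3 u • u = 0 := by
  rw [tripartRelation, hS.sum_partWeight_smul h1 h2 h3, sub_add_sub_cancel', sub_add_sub_cancel,
    sub_self, zero_smul]

lemma affineIndependent_erase [CharZero k] (hS : IsTripartition S V1 V2 V3)
    (h1 : ∑ u ∈ V1, u = e) (h2 : ∑ u ∈ V2, u = e) (h3 : ∑ u ∈ V3, u = e)
    (hrank : #S ≤ finrank k (span k (S : Set E)) + 2) (h12 : #V1 ≠ #V2) (h13 : #V1 ≠ #V3)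
    {v₀ : E} (hv₀ : v₀ ∈ V2) : AffineIndependent k ((↑) : S.erase v₀ → E) := by
  refine affineIndependent_erase_of_relations (hS.subset₂ hv₀) hrank
    (ρ := partWeight V1 V2 1 (-1) 0) ?_ ?_ (hS.sum_tripartRelation_smul h1 h2 h3)
    hS.sum_tripartRelation ?_
  · rw [hS.sum_partWeight_smul h1 h2 h3]; simp
  · have h12' : (#V1 : k) ≠ #V2 := by exact_mod_cast h12
    rw [hS.sum_partWeight]
    exact fun h ↦ h12' (by linear_combination h)
  · rw [tripartRelation, hS.partWeight_of_mem₂ hv₀]; exact sub_ne_zero.2 (by exact_mod_cast h13)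

lemma exists_barycentric_erase [LinearOrder k] [IsStrictOrderedRing k]
    (hS : IsTripartition S V1 V2 V3) (h1 : ∑ u ∈ V1, u = e) (h2 : ∑ u ∈ V2, u = e)
    (h3 : ∑ u ∈ V3, u = e) (h12 : #V1 < #V2) (h23 : #V2 < #V3) {v₀ : E} (hv₀ : v₀ ∈ V2) :
    ∃ w : E → k, ∑ u ∈ S.erase v₀, w u = 1 ∧ ∑ u ∈ S.erase v₀, w u • u = v₀ ∧
      (∀ u ∈ V2, w u = -1) ∧ ∀ u ∈ V1 ∪ V3, 0 < w u := by
  have h12' : (#V1 : k) < #V2 := by exact_mod_cast h12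
  have h23' : (#V2 : k) < #V3 := by exact_mod_cast h23
  have hcv₀ : tripartRelation (k := k) V1 V2 V3 v₀ = #V1 - #V3 := by
    rw [tripartRelation, hS.partWeight_of_mem₂ hv₀]
  obtain ⟨hsum, hcomb⟩ := eq_sum_erase_smul_of_relation (hS.subset₂ hv₀)
    (hS.sum_tripartRelation_smul h1 h2 h3) hS.sum_tripartRelation (by rw [hcv₀]; linarith)
  refine ⟨_, hsum, hcomb, fun u hu ↦ ?_, fun u hu ↦ ?_⟩
  · rw [hcv₀, tripartRelation, hS.partWeight_of_mem₂ hu, neg_div, div_self (by linarith)]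
  · rw [hcv₀, tripartRelation]
    refine div_pos_of_neg_of_neg ?_ (by linarith)
    rcases mem_union.1 hu with hu | hu
    · rw [partWeight_of_mem₁ hu]; linarith
    · rw [hS.partWeight_of_mem₃ hu]; linarith

end IsTripartition

end TripartitionRelation

theorem stmt_9_general
    (n : ℕ)
    (S V1 V2 V3 : Finset (Fin (2 * n) → ℝ))
    (hScard : S.card = n + 2)
    (hunion : V1 ∪ V2 ∪ V3 = S)
    (hd12 : Disjoint V1 V2) (hd13 : Disjoint V1 V3) (hd23 : Disjoint V2 V3)
    (hsum1 : ∑ v ∈ V1, v = fun _ => (1 : ℝ))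
    (hsum2 : ∑ v ∈ V2, v = fun _ => (1 : ℝ))
    (hsum3 : ∑ v ∈ V3, v = fun _ => (1 : ℝ))
    (hspan : Module.finrank ℝ (Submodule.span ℝ (S : Set (Fin (2 * n) → ℝ))) = n)
    (h12 : V1.card < V2.card) (h23 : V2.card < V3.card)
    : ∀ v₀ ∈ V2,
      ((∀ v ∈ V2 \ {v₀}, ∃ f : (Fin (2 * n) → ℝ) →ᵃ[ℝ] ℝ,
          (∀ u ∈ S \ {v₀, v}, f u = 0) ∧ 0 < f v ∧ f v₀ < 0) ∧
        (∀ w ∈ V1 ∪ V3, ∀ f : (Fin (2 * n) → ℝ) →ᵃ[ℝ] ℝ,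
          (∀ u ∈ S \ {v₀, w}, f u = 0) → 0 < f w → 0 < f v₀) ∧
        {v | v ∈ S \ {v₀} ∧ ∃ f : (Fin (2 * n) → ℝ) →ᵃ[ℝ] ℝ,
            (∀ u ∈ S \ {v₀, v}, f u = 0) ∧ 0 < f v ∧ f v₀ < 0}.ncard = V2.card - 1) := by
  classical
  intro v₀ hv₀
  have hS : IsTripartition S V1 V2 V3 := ⟨hunion, hd12, hd13, hd23⟩
  have hsimplex := hS.affineIndependent_erase (k := ℝ) hsum1 hsum2 hsum3
    (by rw [hScard, hspan]) h12.ne (h12.trans h23).ne hv₀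
  obtain ⟨w, hw, hv₀w, hw₂, hw₁₃⟩ :=
    hS.exists_barycentric_erase (k := ℝ) hsum1 hsum2 hsum3 h12 h23 hv₀
  have hfacet : ∀ v u, u ∈ S \ {v₀, v} ↔ u ∈ S.erase v₀ ∧ u ≠ v := by
    intro v u; simp only [mem_sdiff, mem_insert, mem_singleton, mem_erase]; tauto
  have beyond : ∀ v ∈ V2 \ {v₀}, ∃ f : (Fin (2 * n) → ℝ) →ᵃ[ℝ] ℝ,
      (∀ u ∈ S \ {v₀, v}, f u = 0) ∧ 0 < f v ∧ f v₀ < 0 := by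
    intro v hv
    obtain ⟨f, hf, hfv, hfv₀⟩ := hsimplex.exists_affineMap_neg_of_weight_neg hw
      (hS.mem_erase_of_mem_sdiff hv) (by simp [hw₂ v (mem_sdiff.1 hv).1])
    exact ⟨f, fun u hu ↦ ((hfacet v u).1 hu).elim (hf u), hfv, hv₀w ▸ hfv₀⟩
  have not_beyond : ∀ x ∈ V1 ∪ V3, ∀ f : (Fin (2 * n) → ℝ) →ᵃ[ℝ] ℝ,
      (∀ u ∈ S \ {v₀, x}, f u = 0) → 0 < f x → 0 < f v₀ := by
    intro x hx f hf hfx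
    rw [← hv₀w, f.apply_sum_smul_of_eq_zero hw (hS.mem_erase_of_mem_union hv₀ hx)
      fun u hu hux ↦ hf u ((hfacet x u).2 ⟨hu, hux⟩)]
    exact mul_pos (hw₁₃ x hx) hfx
  exact ⟨beyond, not_beyond, hS.ncard_setOf_eq_card₂_sub_one hv₀ beyond
    fun x hx ⟨f, hf, hfx, hfv₀⟩ ↦ (not_beyond x hx f hf hfx).not_gt hfv₀⟩

theorem stmt_9
    (n : ℕ) (hn : 0 < n)
    (S V1 V2 V3 : Finset (Fin (2 * n) → ℝ))
    (h01 : ∀ v ∈ S, ∀ i, v i = 0 ∨ v i = 1)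
    (hScard : S.card = n + 2)
    (hunion : V1 ∪ V2 ∪ V3 = S)
    (hd12 : Disjoint V1 V2) (hd13 : Disjoint V1 V3) (hd23 : Disjoint V2 V3)
    (hne1 : V1.Nonempty) (hne2 : V2.Nonempty) (hne3 : V3.Nonempty)
    (hsum1 : ∑ v ∈ V1, v = fun _ => (1 : ℝ))
    (hsum2 : ∑ v ∈ V2, v = fun _ => (1 : ℝ))
    (hsum3 : ∑ v ∈ V3, v = fun _ => (1 : ℝ))
    (hspan : Module.finrank ℝ (Submodule.span ℝ (S : Set (Fin (2 * n) → ℝ))) = n)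
    (hm1 : 2 ≤ V1.card) (h12 : V1.card < V2.card) (h23 : V2.card < V3.card)
    : ∀ v₀ ∈ V2,
      ((∀ v ∈ V2 \ {v₀}, ∃ f : (Fin (2 * n) → ℝ) →ᵃ[ℝ] ℝ,
          (∀ u ∈ S \ {v₀, v}, f u = 0) ∧ 0 < f v ∧ f v₀ < 0) ∧
        (∀ w ∈ V1 ∪ V3, ∀ f : (Fin (2 * n) → ℝ) →ᵃ[ℝ] ℝ,
          (∀ u ∈ S \ {v₀, w}, f u = 0) → 0 < f w → 0 < f v₀) ∧
        {v | v ∈ S \ {v₀} ∧ ∃ f : (Fin (2 * n) → ℝ) →ᵃ[ℝ] ℝ,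
            (∀ u ∈ S \ {v₀, v}, f u = 0) ∧ 0 < f v ∧ f v₀ < 0}.ncard = V2.card - 1) :=
  stmt_9_general n S V1 V2 V3 hScard hunion hd12 hd13 hd23 hsum1 hsum2 hsum3 hspan h12 h23
end

section
/- (Face characterization, case m₃ = m₂ > m₁ ≥ 2) Assume m₃ = m₂ > m₁ ≥ 2. Then for every nonempty subset F ⊆ S with F ≠ S, the convex hull of F is an extreme subset of the convex hull of S if and only if either (V₂ ⊄ F and V₃ ⊄ F) or V₂ ∪ V₃ ⊆ F. -/
/-!
The n + 2 points of S span an n-dimensional space, so their linear dependences form a plane. It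
contains 1_{V₁} - 1_{V₂}, which is not an affine dependence since m₁ ≠ m₂, and the affine
dependence 1_{V₂} - 1_{V₃} (as m₂ = m₃); hence every affine dependence of S is a multiple of
1_{V₂} - 1_{V₃}. Since m₂ = m₃ ≥ 2, no such multiple is negative at exactly one point, so S is in
convex position. If conv F is a face containing V₂, it contains the common centroid of V₂ and V₃,
hence all of V₃. Conversely, under the stated condition on F, a multiple of 1_{V₂} - 1_{V₃} that
is nonnegative off F vanishes off F, and this is exactly what makes conv F extreme.
-/

open Finset Module Submodule

section indicatorDiff

variable {E : Type*} [DecidableEq E] {S A B : Finset E} {v : E}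

def indicatorDiff (A B : Finset E) (v : E) : ℝ :=
  (if v ∈ A then 1 else 0) - if v ∈ B then 1 else 0

theorem indicatorDiff_of_mem_left (hAB : Disjoint A B) (hv : v ∈ A) :
    indicatorDiff A B v = 1 := by
  simp [indicatorDiff, hv, disjoint_left.1 hAB hv]

theorem indicatorDiff_of_mem_right (hAB : Disjoint A B) (hv : v ∈ B) :
    indicatorDiff A B v = -1 := by
  simp [indicatorDiff, hv, disjoint_right.1 hAB hv]

theorem indicatorDiff_of_notMem (hA : v ∉ A) (hB : v ∉ B) : indicatorDiff A B v = 0 := by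
  simp [indicatorDiff, hA, hB]

theorem sum_indicatorDiff (hA : A ⊆ S) (hB : B ⊆ S) :
    ∑ v ∈ S, indicatorDiff A B v = A.card - B.card := by
  simp only [indicatorDiff, sum_sub_distrib, sum_boole, filter_mem_eq_inter,
    inter_eq_right.2 hA, inter_eq_right.2 hB]

end indicatorDiff

section AffineDependence

variable {E : Type*} [AddCommGroup E] [Module ℝ E]

def IsAffineDependence (S : Finset E) (α : E → ℝ) : Prop :=
  ∑ v ∈ S, α v = 0 ∧ ∑ v ∈ S, α v • v = 0

theorem IsAffineDependence.exists_eq_mul_of_card_eq_finrank_add_two {S : Finset E} {α : E → ℝ}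
    (hα : IsAffineDependence S α) (hS : S.card = finrank ℝ (span ℝ (S : Set E)) + 2)
    {σ ρ : E → ℝ} (hσ : ∑ v ∈ S, σ v • v = 0) (hσ₁ : ∑ v ∈ S, σ v ≠ 0)
    (hρ : IsAffineDependence S ρ) (hρ₀ : ∃ v ∈ S, ρ v ≠ 0) :
    ∃ c : ℝ, ∀ v ∈ S, α v = c * ρ v := by
  let restrict : (E → ℝ) → S → ℝ := fun f v => f v
  let T : (S → ℝ) →ₗ[ℝ] E := Fintype.linearCombination ℝ ((↑) : S → E)
  let total : (S → ℝ) →ₗ[ℝ] ℝ := Fintype.linearCombination ℝ fun _ => 1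
  have hT : ∀ f, T (restrict f) = ∑ v ∈ S, f v • v := fun f => by
    rw [Fintype.linearCombination_apply]
    exact sum_coe_sort S fun v => f v • v
  have htotal : ∀ f, total (restrict f) = ∑ v ∈ S, f v := fun f => by
    simp only [total, Fintype.linearCombination_apply, smul_eq_mul, mul_one]
    exact sum_coe_sort S f
  -- `D` is a proper subspace of the plane `ker T` (it misses `σ`), so the line through `ρ` fills it
  let D := LinearMap.ker total ⊓ LinearMap.ker T
  have hD : ∀ f, restrict f ∈ D ↔ IsAffineDependence S f := fun f => by
    rw [Submodule.mem_inf, LinearMap.mem_ker, LinearMap.mem_ker, hT, htotal, IsAffineDependence]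
  have hkerT : finrank ℝ (LinearMap.ker T) = 2 := by
    have hrange : LinearMap.range T = span ℝ (S : Set E) := by
      rw [Fintype.range_linearCombination, Subtype.range_coe_subtype]
      rfl
    have := LinearMap.finrank_range_add_finrank_ker T
    rw [hrange, finrank_fintype_fun_eq_card, Fintype.card_coe] at this
    omega
  have hDT : D < LinearMap.ker T := SetLike.lt_iff_le_and_exists.2
    ⟨inf_le_right, restrict σ, LinearMap.mem_ker.2 ((hT σ).trans hσ),
      fun h => hσ₁ ((hD σ).1 h).1⟩
  have hρ0 : restrict ρ ≠ 0 := by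
    obtain ⟨v, hv, hρv⟩ := hρ₀
    exact fun h => hρv (congrFun h ⟨v, hv⟩)
  have hspan : span ℝ {restrict ρ} = D :=
    eq_of_le_of_finrank_le ((span_singleton_le_iff_mem _ _).2 ((hD ρ).2 hρ))
      (by have := finrank_lt_finrank_of_lt hDT; rw [finrank_span_singleton hρ0]; omega)
  obtain ⟨c, hc⟩ := mem_span_singleton.1 (hspan ▸ (hD α).2 hα)
  exact ⟨c, fun v hv => (congrFun hc ⟨v, hv⟩).symm⟩

theorem IsExtreme.mem_of_centerMass_mem {ι : Type*} {A C : Set E} (hA : Convex ℝ A)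
    (h : IsExtreme ℝ A C) {s : Finset ι} {w : ι → ℝ} {z : ι → E} (hw : ∀ i ∈ s, 0 < w i)
    (hz : ∀ i ∈ s, z i ∈ A) (hC : s.centerMass w z ∈ C) {j : ι} (hj : j ∈ s) : z j ∈ C := by
  classical
  rcases (s.erase j).eq_empty_or_nonempty with hs | hs
  · rwa [← insert_erase hj, hs, insert_empty, centerMass_singleton j z (hw j hj).ne'] at hC
  have hpos : 0 < ∑ i ∈ s.erase j, w i :=
    sum_pos (fun i hi => hw i (mem_of_mem_erase hi)) hs
  have hrest : (s.erase j).centerMass w z ∈ A :=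
    hA.centerMass_mem (fun i hi => (hw i (mem_of_mem_erase hi)).le) hpos
      (fun i hi => hz i (mem_of_mem_erase hi))
  rw [← insert_erase hj, centerMass_insert (ha := notMem_erase j s) (hw := hpos.ne')] at hC
  have hwj := hw j hj
  exact h.left_mem_of_mem_openSegment (hz j hj) hrest hC
    ⟨_, _, by positivity, by positivity, by field_simp, rfl⟩

theorem IsExtreme.mem_convexHull_of_isAffineDependence {S F : Finset E}
    {α : E → ℝ} (h : IsExtreme ℝ (convexHull ℝ (S : Set E)) (convexHull ℝ (F : Set E)))
    (hα : IsAffineDependence S α) (hαF : ∀ v ∈ S, v ∉ F → 0 ≤ α v) {w : E} (hw : w ∈ S)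
    (hαw : 0 < α w) : w ∈ convexHull ℝ (F : Set E) := by
  set P := S.filter (0 < α ·)
  set N := S.filter (¬ 0 < α ·)
  have hwP : w ∈ P := mem_filter.2 ⟨hw, hαw⟩
  have hPN : ∑ v ∈ P, α v + ∑ v ∈ N, α v = 0 := by rw [sum_filter_add_sum_filter_not, hα.1]
  -- the positive and negative parts of `α` have the same centre of mass, and the negative part
  -- is supported in `F`
  have hcenter : P.centerMass α id = N.centerMass α id :=
    centerMass_of_sum_add_sum_eq_zero hPN ((sum_filter_add_sum_filter_not S _ _).trans hα.2)
  refine h.mem_of_centerMass_mem (z := id) (convex_convexHull ℝ _)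
    (fun v hv => (mem_filter.1 hv).2) (fun v hv => subset_convexHull ℝ _ (mem_filter.1 hv).1)
    ?_ hwP
  have hPpos : 0 < ∑ v ∈ P, α v := sum_pos (fun v hv => (mem_filter.1 hv).2) ⟨w, hwP⟩
  rw [hcenter, ← centerMass_filter_ne_zero]
  refine centerMass_mem_convexHull_of_nonpos _ (fun v hv => ?_) ?_ (fun v hv => ?_)
  · exact not_lt.1 (mem_filter.1 (mem_filter.1 hv).1).2
  · rw [sum_filter_ne_zero]
    linarith
  · obtain ⟨⟨hvS, hv⟩, hv0⟩ := mem_filter.1 hv |>.imp_left mem_filter.1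
    by_contra hvF
    exact hv0 (le_antisymm (not_lt.1 hv) (hαF v hvS hvF))

variable [DecidableEq E]

theorem sum_indicatorDiff_smul {S A B : Finset E} (hA : A ⊆ S) (hB : B ⊆ S) :
    ∑ v ∈ S, indicatorDiff A B v • v = ∑ v ∈ A, v - ∑ v ∈ B, v := by
  simp only [indicatorDiff, sub_smul, ite_smul, one_smul, zero_smul, sum_sub_distrib,
    sum_ite_mem, inter_eq_right.2 hA, inter_eq_right.2 hB]

theorem isAffineDependence_indicatorDiff {S A B : Finset E} (hA : A ⊆ S) (hB : B ⊆ S)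
    (hsum : ∑ v ∈ A, v = ∑ v ∈ B, v) (hcard : A.card = B.card) :
    IsAffineDependence S (indicatorDiff A B) := by
  rw [IsAffineDependence, sum_indicatorDiff hA hB, sum_indicatorDiff_smul hA hB, hsum, hcard]
  simp

theorem mem_convexHull_iff_exists_weights {S F : Finset E} (hFS : F ⊆ S)
    {x : E} : x ∈ convexHull ℝ (F : Set E) ↔ ∃ μ : E → ℝ, (∀ v ∈ S, 0 ≤ μ v) ∧
      (∀ v ∈ S, v ∉ F → μ v = 0) ∧ ∑ v ∈ S, μ v = 1 ∧ ∑ v ∈ S, μ v • v = x := by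
  rw [mem_convexHull']
  constructor
  · rintro ⟨μ, hμ0, hμ1, hμx⟩
    refine ⟨fun v => if v ∈ F then μ v else 0, fun v _ => ?_, fun v _ hv => if_neg hv, ?_, ?_⟩
    · dsimp only
      split_ifs with hv
      exacts [hμ0 v hv, le_rfl]
    · rwa [sum_ite_mem, inter_eq_right.2 hFS]
    · simp_rw [ite_smul, zero_smul]
      rwa [sum_ite_mem, inter_eq_right.2 hFS]
  · rintro ⟨μ, hμ0, hμF, hμ1, hμx⟩
    refine ⟨μ, fun v hv => hμ0 v (hFS hv), ?_, ?_⟩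
    · rwa [sum_subset hFS (fun v hv hvF => hμF v hv hvF)]
    · rwa [sum_subset hFS (fun v hv hvF => by rw [hμF v hv hvF, zero_smul])]

theorem isExtreme_convexHull_of_isAffineDependence {S F : Finset E}
    (hFS : F ⊆ S) (h : ∀ α, IsAffineDependence S α → (∀ v ∈ S, v ∉ F → 0 ≤ α v) →
      ∀ v ∈ S, v ∉ F → α v = 0) :
    IsExtreme ℝ (convexHull ℝ (S : Set E)) (convexHull ℝ (F : Set E)) := by
  refine ⟨convexHull_mono (coe_subset.2 hFS),
    fun x₁ hx₁ x₂ hx₂ x hx ⟨a, b, ha, hb, hab, hx'⟩ => ?_⟩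
  obtain ⟨w₁, hw₁0, -, hw₁1, hw₁x⟩ := (mem_convexHull_iff_exists_weights subset_rfl).1 hx₁
  obtain ⟨w₂, hw₂0, -, hw₂1, hw₂x⟩ := (mem_convexHull_iff_exists_weights subset_rfl).1 hx₂
  obtain ⟨μ, hμ0, hμF, hμ1, hμx⟩ := (mem_convexHull_iff_exists_weights hFS).1 hx
  have hdep : IsAffineDependence S (a • w₁ + b • w₂ - μ) := by
    constructor
    · simp only [Pi.sub_apply, Pi.add_apply, Pi.smul_apply, smul_eq_mul, sum_sub_distrib,
        sum_add_distrib, ← mul_sum, hw₁1, hw₂1, hμ1, hab, mul_one, sub_self]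
    · simp only [Pi.sub_apply, Pi.add_apply, Pi.smul_apply, smul_eq_mul, sub_smul, add_smul,
        mul_smul, sum_sub_distrib, sum_add_distrib, ← smul_sum, hw₁x, hw₂x, hμx, hx', sub_self]
  have hzero := h _ hdep (fun v hv hvF => by
    simp only [Pi.sub_apply, Pi.add_apply, Pi.smul_apply, hμF v hv hvF, sub_zero]
    exact add_nonneg (smul_nonneg ha.le (hw₁0 v hv)) (smul_nonneg hb.le (hw₂0 v hv)))
  refine (mem_convexHull_iff_exists_weights hFS).2 ⟨w₁, hw₁0, fun v hv hvF => ?_, hw₁1, hw₁x⟩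
  have := hzero v hv hvF
  simp only [Pi.sub_apply, Pi.add_apply, Pi.smul_apply, smul_eq_mul, hμF v hv hvF,
    sub_zero] at this
  have h₁ := mul_nonneg ha.le (hw₁0 v hv)
  have h₂ := mul_nonneg hb.le (hw₂0 v hv)
  exact (mul_eq_zero.1 (by linarith : a * w₁ v = 0)).resolve_left ha.ne'

theorem IsExtreme.subset_of_sum_eq {S F A B : Finset E}
    (h : IsExtreme ℝ (convexHull ℝ (S : Set E)) (convexHull ℝ (F : Set E))) (hFS : F ⊆ S)
    (hS : ∀ w ∈ S, w ∉ F → w ∉ convexHull ℝ (F : Set E)) (hA : A ⊆ F) (hB : B ⊆ S)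
    (hsum : ∑ v ∈ A, v = ∑ v ∈ B, v) (hcard : A.card = B.card) : B ⊆ F := by
  intro w hwB
  by_contra hwF
  have hnotA : ∀ v, v ∉ F → v ∉ A := fun v hvF hvA => hvF (hA hvA)
  refine hS w (hB hwB) hwF (h.mem_convexHull_of_isAffineDependence
    (isAffineDependence_indicatorDiff hB (hA.trans hFS) hsum.symm hcard.symm)
    (fun v _ hvF => ?_) (hB hwB) ?_)
  · rw [indicatorDiff, if_neg (hnotA v hvF), sub_zero]
    split_ifs <;> norm_num
  · simp [indicatorDiff, hwB, hnotA w hwF]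

end AffineDependence

section BalancedTripartition

variable {E : Type*} [AddCommGroup E] [Module ℝ E] [DecidableEq E]

structure IsBalancedTripartition (S V₁ V₂ V₃ : Finset E) : Prop where
  union_subset : V₁ ∪ V₂ ∪ V₃ ⊆ S
  disjoint : Disjoint V₂ V₃
  sum_eq₁₂ : ∑ v ∈ V₁, v = ∑ v ∈ V₂, v
  sum_eq₂₃ : ∑ v ∈ V₂, v = ∑ v ∈ V₃, v
  card_eq : S.card = finrank ℝ (span ℝ (S : Set E)) + 2
  card_lt : V₁.card < V₂.card
  card_eq₃₂ : V₃.card = V₂.card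
  two_le_card : 2 ≤ V₂.card

namespace IsBalancedTripartition

variable {S V₁ V₂ V₃ : Finset E}

theorem subset₁ (hV : IsBalancedTripartition S V₁ V₂ V₃) : V₁ ⊆ S :=
  fun _ hv => hV.union_subset (by simp [hv])

theorem subset₂ (hV : IsBalancedTripartition S V₁ V₂ V₃) : V₂ ⊆ S :=
  fun _ hv => hV.union_subset (by simp [hv])

theorem subset₃ (hV : IsBalancedTripartition S V₁ V₂ V₃) : V₃ ⊆ S :=
  fun _ hv => hV.union_subset (by simp [hv])

theorem exists_eq_mul_indicatorDiff (hV : IsBalancedTripartition S V₁ V₂ V₃) {α : E → ℝ}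
    (hα : IsAffineDependence S α) : ∃ c : ℝ, ∀ v ∈ S, α v = c * indicatorDiff V₂ V₃ v := by
  obtain ⟨v, hv⟩ := card_pos.1 (hV.card_lt.trans_le' (Nat.zero_le _))
  refine hα.exists_eq_mul_of_card_eq_finrank_add_two hV.card_eq
    (σ := indicatorDiff V₁ V₂) ?_ ?_ (isAffineDependence_indicatorDiff hV.subset₂ hV.subset₃
      hV.sum_eq₂₃ hV.card_eq₃₂.symm)
    ⟨v, hV.subset₂ hv, by simp [indicatorDiff_of_mem_left hV.disjoint hv]⟩
  · rw [sum_indicatorDiff_smul hV.subset₁ hV.subset₂, hV.sum_eq₁₂, sub_self]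
  · rw [sum_indicatorDiff hV.subset₁ hV.subset₂, sub_ne_zero, Ne, Nat.cast_inj]
    exact hV.card_lt.ne

theorem notMem_convexHull (hV : IsBalancedTripartition S V₁ V₂ V₃) {F : Finset E}
    (hFS : F ⊆ S) {w : E} (hw : w ∈ S) (hwF : w ∉ F) : w ∉ convexHull ℝ (F : Set E) := by
  intro hwconv
  obtain ⟨μ, hμ0, hμF, hμ1, hμw⟩ := (mem_convexHull_iff_exists_weights hFS).1 hwconv
  have hdep : IsAffineDependence S (fun v => μ v - if v = w then 1 else 0) := by
    simp only [IsAffineDependence, sub_smul, ite_smul, one_smul, zero_smul, sum_sub_distrib,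
      sum_ite_eq', if_pos hw, hμ1, hμw, sub_self, and_self]
  obtain ⟨c, hc⟩ := hV.exists_eq_mul_indicatorDiff hdep
  have hcw : c * indicatorDiff V₂ V₃ w = -1 := by simp [← hc w hw, hμF w hw hwF]
  have hnonneg : ∀ u ∈ S, u ≠ w → 0 ≤ c * indicatorDiff V₂ V₃ u := fun u hu huw => by
    simpa [← hc u hu, huw] using hμ0 u hu
  rcases lt_or_gt_of_ne (left_ne_zero_of_mul (hcw.trans_ne (by norm_num))) with hc0 | hc0
  · obtain ⟨u, hu, huw⟩ := exists_mem_ne hV.two_le_card w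
    have := hnonneg u (hV.subset₂ hu) huw
    rw [indicatorDiff_of_mem_left hV.disjoint hu] at this
    linarith
  · obtain ⟨u, hu, huw⟩ := exists_mem_ne (hV.card_eq₃₂ ▸ hV.two_le_card) w
    have := hnonneg u (hV.subset₃ hu) huw
    rw [indicatorDiff_of_mem_right hV.disjoint hu] at this
    linarith

theorem eq_zero_of_nonneg (hV : IsBalancedTripartition S V₁ V₂ V₃) {F : Finset E}
    (hF : (¬ V₂ ⊆ F ∧ ¬ V₃ ⊆ F) ∨ V₂ ∪ V₃ ⊆ F) {α : E → ℝ} (hα : IsAffineDependence S α)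
    (hαF : ∀ v ∈ S, v ∉ F → 0 ≤ α v) : ∀ v ∈ S, v ∉ F → α v = 0 := by
  obtain ⟨c, hc⟩ := hV.exists_eq_mul_indicatorDiff hα
  rcases hF with ⟨h₂, h₃⟩ | h₂₃
  · obtain ⟨u₂, hu₂, hu₂F⟩ := not_subset.1 h₂
    obtain ⟨u₃, hu₃, hu₃F⟩ := not_subset.1 h₃
    have h₂ := hαF u₂ (hV.subset₂ hu₂) hu₂F
    have h₃ := hαF u₃ (hV.subset₃ hu₃) hu₃F
    rw [hc u₂ (hV.subset₂ hu₂), indicatorDiff_of_mem_left hV.disjoint hu₂] at h₂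
    rw [hc u₃ (hV.subset₃ hu₃), indicatorDiff_of_mem_right hV.disjoint hu₃] at h₃
    intro v hv _
    rw [hc v hv, show c = 0 by linarith, zero_mul]
  · intro v hv hvF
    rw [hc v hv, indicatorDiff_of_notMem (fun h => hvF (h₂₃ (mem_union_left _ h)))
      (fun h => hvF (h₂₃ (mem_union_right _ h))), mul_zero]

end IsBalancedTripartition

end BalancedTripartition

theorem stmt_10_general
    (n : ℕ)
    (S V1 V2 V3 : Finset (Fin (2 * n) → ℝ))
    (hScard : S.card = n + 2)
    (hunion : V1 ∪ V2 ∪ V3 = S)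
    (hd23 : Disjoint V2 V3)
    (hsum1 : ∑ v ∈ V1, v = fun _ => (1 : ℝ))
    (hsum2 : ∑ v ∈ V2, v = fun _ => (1 : ℝ))
    (hsum3 : ∑ v ∈ V3, v = fun _ => (1 : ℝ))
    (hspan : Module.finrank ℝ (Submodule.span ℝ (S : Set (Fin (2 * n) → ℝ))) = n)
    (hm1 : 2 ≤ V1.card) (h12 : V1.card < V2.card) (h23 : V3.card = V2.card)
    : ∀ F ⊆ S, F.Nonempty → F ≠ S →
      (IsExtreme ℝ (convexHull ℝ (S : Set (Fin (2 * n) → ℝ)))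
          (convexHull ℝ (F : Set (Fin (2 * n) → ℝ))) ↔
        ((¬ V2 ⊆ F ∧ ¬ V3 ⊆ F) ∨ V2 ∪ V3 ⊆ F)) := by
  intro F hFS _ _
  have hV : IsBalancedTripartition S V1 V2 V3 :=
    ⟨hunion.le, hd23, hsum1.trans hsum2.symm, hsum2.trans hsum3.symm, by omega, h12, h23,
      by omega⟩
  constructor
  · intro hext
    have hS : ∀ w ∈ S, w ∉ F → w ∉ convexHull ℝ (F : Set _) := fun _ => hV.notMem_convexHull hFS
    have h₂₃ : V2 ⊆ F → V3 ⊆ F := fun h₂ =>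
      hext.subset_of_sum_eq hFS hS h₂ hV.subset₃ hV.sum_eq₂₃ h23.symm
    have h₃₂ : V3 ⊆ F → V2 ⊆ F := fun h₃ =>
      hext.subset_of_sum_eq hFS hS h₃ hV.subset₂ hV.sum_eq₂₃.symm h23
    rw [union_subset_iff]
    tauto
  · exact fun hF => isExtreme_convexHull_of_isAffineDependence hFS fun _ hα hαF =>
      hV.eq_zero_of_nonneg hF hα hαF

theorem stmt_10
    (n : ℕ) (hn : 0 < n)
    (S V1 V2 V3 : Finset (Fin (2 * n) → ℝ))
    (h01 : ∀ v ∈ S, ∀ i, v i = 0 ∨ v i = 1)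
    (hScard : S.card = n + 2)
    (hunion : V1 ∪ V2 ∪ V3 = S)
    (hd12 : Disjoint V1 V2) (hd13 : Disjoint V1 V3) (hd23 : Disjoint V2 V3)
    (hne1 : V1.Nonempty) (hne2 : V2.Nonempty) (hne3 : V3.Nonempty)
    (hsum1 : ∑ v ∈ V1, v = fun _ => (1 : ℝ))
    (hsum2 : ∑ v ∈ V2, v = fun _ => (1 : ℝ))
    (hsum3 : ∑ v ∈ V3, v = fun _ => (1 : ℝ))
    (hspan : Module.finrank ℝ (Submodule.span ℝ (S : Set (Fin (2 * n) → ℝ))) = n)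
    (hm1 : 2 ≤ V1.card) (h12 : V1.card < V2.card) (h23 : V3.card = V2.card)
    : ∀ F ⊆ S, F.Nonempty → F ≠ S →
      (IsExtreme ℝ (convexHull ℝ (S : Set (Fin (2 * n) → ℝ)))
          (convexHull ℝ (F : Set (Fin (2 * n) → ℝ))) ↔
        ((¬ V2 ⊆ F ∧ ¬ V3 ⊆ F) ∨ V2 ∪ V3 ⊆ F)) :=
  stmt_10_general n S V1 V2 V3 hScard hunion hd23 hsum1 hsum2 hsum3 hspan hm1 h12 h23
end
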